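/- Let b and m be integers with 2 ≤ b ≤ m. Then the critical exponent of t_{b,m} equals 2 and is attained: (1) there exist i ≥ 0 and ℓ ≥ 1 such that t(i+j) = t(i+j+ℓ) for all 0 ≤ j < ℓ (a square occurs in t, indeed one occurs inside the first two blocks), and (2) for all i ≥ 0 and ℓ ≥ 1 it is not the case that t(i+j) = t(i+j+ℓ) for all 0 ≤ j < ℓ+1 (no window of length 2ℓ+1 with period ℓ occurs, i.e., t is overlap-free). -/
import Mathlib


/-- The generalized Thue–Morse word: `t b m n = s_b(n) mod m`, valued in `ZMod m`. -/
def genTM (b m n : ℕ) : ZMod m := ((Nat.digits b n).sum : ZMod m)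

lemma genTM_mul_add (b m q s : ℕ) (hb : 2 ≤ b) (hs : s < b) :
    genTM b m (b * q + s) = genTM b m q + (s : ZMod m) := by
  rcases Nat.eq_zero_or_pos (b * q + s) with h | h
  · have hq : q = 0 := by nlinarith
    have hs0 : s = 0 := by omega
    simp [genTM, hq, hs0]
  · unfold genTM
    rw [Nat.digits_def' (by omega : 1 < b) h]
    have h1 : (b * q + s) % b = s := by
      rw [Nat.mul_add_mod, Nat.mod_eq_of_lt hs]
    have h2 : (b * q + s) / b = q := by
      rw [Nat.mul_add_div (by omega), Nat.div_eq_of_lt hs]; omega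
    rw [h1, h2, List.sum_cons]
    push_cast; ring

lemma genTM_succ (b m n : ℕ) (hb : 2 ≤ b) (h : ¬ b ∣ (n + 1)) :
    genTM b m (n + 1) = genTM b m n + 1 := by
  set q := (n + 1) / b with hq
  set s := (n + 1) % b with hs
  have hsb : s < b := Nat.mod_lt _ (by omega)
  have hs0 : s ≠ 0 := fun h0 => h (Nat.dvd_of_mod_eq_zero (hs ▸ h0))
  have he : n + 1 = b * q + s := by
    rw [hq, hs]; exact (Nat.div_add_mod (n+1) b).symm
  have he' : n = b * q + (s - 1) := by omega
  rw [he, he', genTM_mul_add b m q s hb hsb, genTM_mul_add b m q (s-1) hb (by omega)]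
  have : s = (s - 1) + 1 := by omega
  rw [this]; push_cast; ring

lemma cast_ne_zero_of_lt (m k : ℕ) (h1 : 0 < k) (h2 : k < m) : (k : ZMod m) ≠ 0 := by
  intro h0
  rw [ZMod.natCast_eq_zero_iff] at h0
  have := Nat.le_of_dvd h1 h0
  omega

lemma genTM_no_overlap (b m : ℕ) (hb : 2 ≤ b) (hbm : b ≤ m) :
    ∀ ℓ : ℕ, 1 ≤ ℓ → ∀ i : ℕ,
      ¬ ∀ j : ℕ, j < ℓ + 1 → genTM b m (i + j) = genTM b m (i + j + ℓ) := by
  intro ℓ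
  induction ℓ using Nat.strong_induction_on with
  | _ ℓ IH =>
  intro hℓ i H
  by_cases hdvd : b ∣ ℓ
  · -- reduce to period ℓ / b
    obtain ⟨ℓ₁, rfl⟩ := hdvd
    have hℓ₁ : 1 ≤ ℓ₁ := by
      rcases Nat.eq_zero_or_pos ℓ₁ with h | h
      · subst h; simp at hℓ
      · exact h
    have hlt : ℓ₁ < b * ℓ₁ := by nlinarith
    refine IH ℓ₁ hlt hℓ₁ (i / b) ?_
    intro j hj
    have hdm : b * (i / b) + i % b = i := Nat.div_add_mod i b
    have hmod : i % b < b := Nat.mod_lt _ (by omega)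
    have h := H (b * j) (by nlinarith)
    have e1 : i + b * j = b * (i / b + j) + i % b := by
      rw [Nat.mul_add]; omega
    have e2 : i + b * j + b * ℓ₁ = b * (i / b + j + ℓ₁) + i % b := by
      rw [Nat.mul_add, Nat.mul_add]; omega
    rw [e2, e1, genTM_mul_add b m _ _ hb hmod, genTM_mul_add b m _ _ hb hmod] at h
    exact add_right_cancel h
  · -- b does not divide ℓ
    by_cases hex : ∃ y : ℕ, ¬ b ∣ y ∧ i < b * y ∧ b * y ≤ i + 2 * ℓ
    · -- a multiple b*y with b ∤ y inside the window : derive (b-1 : ZMod m) = 0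
      obtain ⟨y, hy, hy1, hy2⟩ := hex
      have hy0 : y ≠ 0 := by rintro rfl; exact hy (dvd_zero b)
      obtain ⟨y', rfl⟩ : ∃ y', y = y' + 1 := ⟨y - 1, by omega⟩
      set x := b * (y' + 1) with hx
      have hbx : b ∣ x := ⟨y' + 1, hx⟩
      have hxe : x = b * y' + b := by rw [hx]; ring
      have t1 : genTM b m x = genTM b m y' + 1 := by
        have h1 : genTM b m (b * (y' + 1) + 0) = genTM b m (y' + 1) + ((0:ℕ) : ZMod m) :=
          genTM_mul_add b m (y' + 1) 0 hb (by omega)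
        have h2 : genTM b m (y' + 1) = genTM b m y' + 1 := genTM_succ b m y' hb hy
        simpa [h2] using h1
      have t2 : genTM b m (x - 1) = genTM b m y' + ((b - 1 : ℕ) : ZMod m) := by
        have hx1 : x - 1 = b * y' + (b - 1) := by omega
        rw [hx1]
        exact genTM_mul_add b m y' (b - 1) hb (by omega)
      have key : genTM b m x = genTM b m (x - 1) + 1 := by
        by_cases hc : x ≤ i + ℓ
        · have h₁ := H (x - 1 - i) (by omega)
          have h₂ := H (x - i) (by omega)
          have e1 : i + (x - 1 - i) = x - 1 := by omega
          have e2 : i + (x - 1 - i) + ℓ = x - 1 + ℓ := by omega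
          have e3 : i + (x - i) = x := by omega
          have e4 : i + (x - i) + ℓ = x + ℓ := by omega
          rw [e2, e1] at h₁
          rw [e4, e3] at h₂
          have hnd : ¬ b ∣ (x - 1 + ℓ + 1) := by
            have e : x - 1 + ℓ + 1 = x + ℓ := by omega
            rw [e]
            intro hd
            exact hdvd ((Nat.dvd_add_right hbx).mp hd)
          have h₃ := genTM_succ b m (x - 1 + ℓ) hb hnd
          have e5 : x - 1 + ℓ + 1 = x + ℓ := by omega
          rw [e5] at h₃
          rw [h₂, h₃, h₁]
        · push_neg at hc
          have h₁ := H (x - 1 - ℓ - i) (by omega)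
          have h₂ := H (x - ℓ - i) (by omega)
          have e1 : i + (x - 1 - ℓ - i) = x - 1 - ℓ := by omega
          have e2 : i + (x - 1 - ℓ - i) + ℓ = x - 1 := by omega
          have e3 : i + (x - ℓ - i) = x - ℓ := by omega
          have e4 : i + (x - ℓ - i) + ℓ = x := by omega
          rw [e2, e1] at h₁
          rw [e4, e3] at h₂
          have hnd : ¬ b ∣ (x - ℓ - 1 + 1) := by
            have e : x - ℓ - 1 + 1 = x - ℓ := by omega
            rw [e]
            intro hd
            have hsub := Nat.dvd_sub hbx hd
            have e2 : x - (x - ℓ) = ℓ := by omega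
            rw [e2] at hsub
            exact hdvd hsub
          have h₃ := genTM_succ b m (x - ℓ - 1) hb hnd
          have e5 : x - ℓ - 1 + 1 = x - ℓ := by omega
          rw [e5] at h₃
          have e6 : x - ℓ - 1 = x - 1 - ℓ := by omega
          rw [← h₂, h₃, e6, h₁]
      rw [t1, t2] at key
      have hz : ((b - 1 : ℕ) : ZMod m) = 0 := by linear_combination -key
      exact cast_ne_zero_of_lt m (b - 1) (by omega) (by omega) hz
    · -- every nearby multiple of b has quotient divisible by b : same-block argument
      push_neg at hex
      have hdm : b * (i / b) + i % b = i := Nat.div_add_mod i b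
      have hmod : i % b < b := Nat.mod_lt _ (by omega)
      by_cases hc1 : i + ℓ < b * (i / b + 1)
      · -- i and i + ℓ lie in the same block
        have hsum : i % b + ℓ < b := by
          have e : b * (i / b + 1) = b * (i / b) + b := by ring
          omega
        have hti : genTM b m i = genTM b m (i / b) + ((i % b : ℕ) : ZMod m) := by
          conv_lhs => rw [← hdm]
          exact genTM_mul_add b m _ _ hb hmod
        have htil : genTM b m (i + ℓ) = genTM b m (i / b) + ((i % b + ℓ : ℕ) : ZMod m) := by
          have e : i + ℓ = b * (i / b) + (i % b + ℓ) := by omega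
          rw [e]
          exact genTM_mul_add b m _ _ hb hsum
        have h0 := H 0 (by omega)
        simp only [Nat.add_zero] at h0
        rw [hti, htil] at h0
        have h2 := add_left_cancel h0
        have hz : ((ℓ : ℕ) : ZMod m) = 0 := by push_cast at h2; linear_combination -h2
        exact cast_ne_zero_of_lt m ℓ (by omega) (by omega) hz
      · push_neg at hc1
        have hd1 : b ∣ (i / b + 1) := by
          by_contra hnd
          have e : b * (i / b + 1) = b * (i / b) + b := by ring
          have := hex (i / b + 1) hnd (by omega)
          omega
        set q' := (i + ℓ) / b with hq'
        have hdm' : b * q' + (i + ℓ) % b = i + ℓ := Nat.div_add_mod _ b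
        have hmod' : (i + ℓ) % b < b := Nat.mod_lt _ (by omega)
        by_cases hc2 : i + 2 * ℓ < b * (q' + 1)
        · -- i + ℓ and i + 2ℓ lie in the same block
          have hsum : (i + ℓ) % b + ℓ < b := by
            have e : b * (q' + 1) = b * q' + b := by ring
            omega
          have hti : genTM b m (i + ℓ) = genTM b m q' + (((i + ℓ) % b : ℕ) : ZMod m) := by
            conv_lhs => rw [← hdm']
            exact genTM_mul_add b m _ _ hb hmod'
          have htil : genTM b m (i + ℓ + ℓ) =
              genTM b m q' + (((i + ℓ) % b + ℓ : ℕ) : ZMod m) := by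
            have e : i + ℓ + ℓ = b * q' + ((i + ℓ) % b + ℓ) := by omega
            rw [e]
            exact genTM_mul_add b m _ _ hb hsum
          have h0 := H ℓ (by omega)
          rw [hti, htil] at h0
          have h2 := add_left_cancel h0
          have hz : ((ℓ : ℕ) : ZMod m) = 0 := by push_cast at h2; linear_combination -h2
          exact cast_ne_zero_of_lt m ℓ (by omega) (by omega) hz
        · push_neg at hc2
          have e' : b * (q' + 1) = b * q' + b := by ring
          have hd2 : b ∣ (q' + 1) := by
            by_contra hnd
            have := hex (q' + 1) hnd (by omega)
            omega
          have hq'ge : i / b + 1 ≤ q' := by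
            rw [hq', Nat.le_div_iff_mul_le (show 0 < b by omega)]
            have e : (i / b + 1) * b = b * (i / b + 1) := by ring
            omega
          have hd3 : b ∣ q' := by
            by_contra hnd
            have e1 : b * (i / b + 1) ≤ b * q' := Nat.mul_le_mul_left b hq'ge
            have e : b * (i / b + 1) = b * (i / b) + b := by ring
            have := hex q' hnd (by omega)
            omega
          have hone : b ∣ 1 := by
            have := Nat.dvd_sub hd2 hd3
            simpa using this
          have := Nat.le_of_dvd one_pos hone
          omega

/-- for `2 ≤ b ≤ m`, the critical exponent of `t_{b,m}` is `2` and
attained: a square occurs inside the first two blocks, and no overlap occurs. -/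
theorem genTM_square_case_critical (b m : ℕ) (hb : 2 ≤ b) (hbm : b ≤ m) :
    (∃ i ℓ : ℕ, 1 ≤ ℓ ∧ i + 2 * ℓ ≤ 2 * b ∧
      ∀ j : ℕ, j < ℓ → genTM b m (i + j) = genTM b m (i + j + ℓ)) ∧
    (∀ i ℓ : ℕ, 1 ≤ ℓ →
      ¬ ∀ j : ℕ, j < ℓ + 1 → genTM b m (i + j) = genTM b m (i + j + ℓ)) := by
  constructor
  · refine ⟨1, b - 1, by omega, by omega, ?_⟩
    intro j hj
    have ht0 : genTM b m 0 = 0 := by simp [genTM]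
    have h1 : genTM b m (1 + j) = ((1 + j : ℕ) : ZMod m) := by
      have e : 1 + j = b * 0 + (1 + j) := by omega
      conv_lhs => rw [e]
      rw [genTM_mul_add b m 0 (1 + j) hb (by omega), ht0, zero_add]
    have h2 : genTM b m (1 + j + (b - 1)) = genTM b m 1 + (j : ZMod m) := by
      have e : 1 + j + (b - 1) = b * 1 + j := by omega
      rw [e]
      exact genTM_mul_add b m 1 j hb (by omega)
    have h3 : genTM b m 1 = 1 := by
      have h := genTM_mul_add b m 0 1 hb (by omega)
      simpa [ht0] using h
    rw [h1, h2, h3]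
    push_cast; ring
  · exact fun i ℓ hℓ => genTM_no_overlap b m hb hbm ℓ hℓ i
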